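/- arXiv:1301.4428 — 2 statements merged into one kernel-verified Lean document; each statement's English description precedes it below -/
import Mathlib

section
/- Let π_0 be the density of Γ(λ, q) for some λ > 0, and let π̃_0 be a probability density on (0,∞) such that h_0 = π̃_0/π_0 is Lipschitz continuous and h_0 ≥ H for some constant H > 0. Let π_n^{y_{1:n}} and π̃_n^{y_{1:n}} be the optimal filter densities started from π_0 and π̃_0 respectively. Then for every n ≥ 1, ‖π_n^{y_{1:n}} − π̃_n^{y_{1:n}}‖_var ≤ (√(2q) ‖h_0‖_Lip / (2H)) · (b^n λ_n)^{−1}, where λ_n = b^{−n} λ + Σ_{j=1}^n b^{j−n} y_j. -/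
open MeasureTheory Set

/-- Density of the Gamma distribution `Γ(lam, r)` with rate `lam` and shape `r`
(for `x > 0`). -/
noncomputable def gammaDen (lam r x : ℝ) : ℝ :=
  lam ^ r * x ^ (r - 1) * Real.exp (-(lam * x)) / Real.Gamma r

/-- Signal transition density `p(s, x)`. -/
noncomputable def pKer (α β b s x : ℝ) : ℝ :=
  if 0 ≤ x ∧ x ≤ b * s then
    (b * s) ^ (1 - (α + β)) * x ^ (α - 1) * (b * s - x) ^ (β - 1) /
      (Real.Gamma α * Real.Gamma β / Real.Gamma (α + β))
  else 0

/-- Observation density `g(x, y)`. -/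
noncomputable def gObs (β x y : ℝ) : ℝ :=
  x ^ β * y ^ (β - 1) * Real.exp (-(x * y)) / Real.Gamma β

/-- `h` is Lipschitz continuous on `(0, ∞)`. -/
def LipOn (h : ℝ → ℝ) : Prop :=
  ∃ K : ℝ, 0 ≤ K ∧ ∀ x ∈ Set.Ioi (0 : ℝ), ∀ y ∈ Set.Ioi (0 : ℝ), |h x - h y| ≤ K * |x - y|

/-- The smallest Lipschitz constant of `h : (0, ∞) → ℝ`. -/
noncomputable def lipNorm (h : ℝ → ℝ) : ℝ :=
  sInf {K : ℝ | 0 ≤ K ∧ ∀ x ∈ Set.Ioi (0 : ℝ), ∀ y ∈ Set.Ioi (0 : ℝ), |h x - h y| ≤ K * |x - y|}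

/-- Total variation distance between probability densities on `(0, ∞)`. -/
noncomputable def tvDist (f g : ℝ → ℝ) : ℝ :=
  (1 / 2) * ∫ x in Set.Ioi (0 : ℝ), |f x - g x|

/-!
Both filters stay in the Gamma family up to a tilt. By conjugacy of the transition and of the
observation densities with Gamma laws, `π_n = Γ(λ_n, q)` with `λ_{n+1} = λ_n / b + y_{n+1}`, and
`π̃_n ∝ π_n h_n`, where `h_{n+1}(x) = E h_n(x / b + T)` for `T ~ Γ(λ_n, β)`. This average keeps
the lower bound `H` and divides the Lipschitz constant by `b`, so `Lip(h_n) ≤ ‖h₀‖_Lip / bⁿ`.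
For `X ~ π_n`, `2 ‖π_n - π̃_n‖_var = E|h_n(X) - E h_n(X)| / E h_n(X)`, the denominator is at
least `H`, and by Cauchy–Schwarz, since the mean minimises the quadratic deviation,
`E|h_n(X) - E h_n(X)| ≤ ‖h_n(X) - h_n(E X)‖₂ ≤ Lip(h_n) · sd(X) = Lip(h_n) √q / λ_n`.
-/

open scoped NNReal

section GammaDensity

variable {lam r : ℝ}

lemma gammaDen_pos (hlam : 0 < lam) (hr : 0 < r) {x : ℝ} (hx : 0 < x) :
    0 < gammaDen lam r x := by
  unfold gammaDen
  have := Real.Gamma_pos_of_pos hr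
  positivity

lemma measurable_gammaDen : Measurable (gammaDen lam r) := by
  unfold gammaDen
  fun_prop

lemma gammaDen_eq (lam r x : ℝ) :
    gammaDen lam r x = lam ^ r / Real.Gamma r * (x ^ (r - 1) * Real.exp (-(lam * x))) := by
  unfold gammaDen; ring

lemma integrableOn_gammaDen (hlam : 0 < lam) (hr : 0 < r) :
    IntegrableOn (gammaDen lam r) (Ioi 0) := by
  have h : IntegrableOn (fun x : ℝ => x ^ (r - 1) * Real.exp (-lam * x ^ (1 : ℝ))) (Ioi 0) :=
    integrableOn_rpow_mul_exp_neg_mul_rpow (by linarith) zero_lt_one hlam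
  simp only [Real.rpow_one, neg_mul] at h
  rw [show gammaDen lam r = _ from funext (gammaDen_eq lam r)]
  exact h.const_mul _

lemma integral_gammaDen (hlam : 0 < lam) (hr : 0 < r) :
    ∫ x in Ioi 0, gammaDen lam r x = 1 := by
  have := Real.Gamma_pos_of_pos hr
  have := Real.rpow_pos_of_pos hlam r
  simp only [gammaDen_eq, integral_const_mul, Real.integral_rpow_mul_exp_neg_mul_Ioi hr hlam,
    one_div, Real.inv_rpow hlam.le]
  field_simp

lemma pow_mul_gammaDen (hlam : 0 < lam) (hr : 0 < r) (k : ℕ) {x : ℝ} (hx : 0 < x) :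
    x ^ k * gammaDen lam r x =
      Real.Gamma (r + k) / (Real.Gamma r * lam ^ k) * gammaDen lam (r + k) x := by
  have := Real.Gamma_pos_of_pos hr
  have := Real.Gamma_pos_of_pos (by positivity : 0 < r + k)
  have hx' : x ^ (r + k - 1) = x ^ (r - 1) * x ^ k := by
    rw [show r + k - 1 = (r - 1) + (k : ℝ) by ring, Real.rpow_add hx, Real.rpow_natCast]
  have hlam' : lam ^ (r + k) = lam ^ r * lam ^ k := by
    rw [Real.rpow_add hlam, Real.rpow_natCast]
  unfold gammaDen
  rw [hx', hlam']
  field_simp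

lemma integrableOn_pow_mul_gammaDen (hlam : 0 < lam) (hr : 0 < r) (k : ℕ) :
    IntegrableOn (fun x => x ^ k * gammaDen lam r x) (Ioi 0) :=
  IntegrableOn.congr_fun ((integrableOn_gammaDen hlam (by positivity : 0 < r + k)).const_mul _)
    (fun _ hx => (pow_mul_gammaDen hlam hr k hx).symm) measurableSet_Ioi

lemma integral_pow_mul_gammaDen (hlam : 0 < lam) (hr : 0 < r) (k : ℕ) :
    ∫ x in Ioi 0, x ^ k * gammaDen lam r x = Real.Gamma (r + k) / (Real.Gamma r * lam ^ k) := by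
  rw [setIntegral_congr_fun measurableSet_Ioi (fun _ hx => pow_mul_gammaDen hlam hr k hx),
    integral_const_mul, integral_gammaDen hlam (by positivity), mul_one]

lemma integral_gammaDen_mul_sub_sq (hlam : 0 < lam) (hr : 0 < r) :
    ∫ x in Ioi 0, gammaDen lam r x * (x - r / lam) ^ 2 = r / lam ^ 2 := by
  have := Real.Gamma_pos_of_pos hr
  have hm : ∀ k : ℕ, IntegrableOn (fun x => x ^ k * gammaDen lam r x) (Ioi 0) :=
    integrableOn_pow_mul_gammaDen hlam hr
  have h21 : IntegrableOn
      (fun x => x ^ 2 * gammaDen lam r x - 2 * (r / lam) * (x ^ 1 * gammaDen lam r x)) (Ioi 0) :=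
    (hm 2).sub ((hm 1).const_mul _)
  simp_rw [show ∀ x, gammaDen lam r x * (x - r / lam) ^ 2 = x ^ 2 * gammaDen lam r x
      - 2 * (r / lam) * (x ^ 1 * gammaDen lam r x) + (r / lam) ^ 2 * (x ^ 0 * gammaDen lam r x)
    from fun x => by ring]
  rw [integral_add h21 ((hm 0).const_mul _), integral_sub (hm 2) ((hm 1).const_mul _),
    integral_const_mul, integral_const_mul, integral_pow_mul_gammaDen hlam hr,
    integral_pow_mul_gammaDen hlam hr, integral_pow_mul_gammaDen hlam hr]
  push_cast
  rw [add_zero, Real.Gamma_add_one hr.ne', show r + 2 = (r + 1) + 1 by ring,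
    Real.Gamma_add_one (by positivity), Real.Gamma_add_one hr.ne']
  field_simp
  ring

lemma integrableOn_gammaDen_mul_of_abs_le (hlam : 0 < lam) (hr : 0 < r) {φ : ℝ → ℝ} {A B : ℝ}
    (hφm : AEStronglyMeasurable φ (volume.restrict (Ioi 0)))
    (hφ : ∀ x ∈ Ioi 0, |φ x| ≤ A + B * x ^ 2) :
    IntegrableOn (fun x => gammaDen lam r x * φ x) (Ioi 0) := by
  refine Integrable.mono'
    (g := fun x => A * (x ^ 0 * gammaDen lam r x) + B * (x ^ 2 * gammaDen lam r x))
    (((integrableOn_pow_mul_gammaDen hlam hr 0).const_mul A).add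
      ((integrableOn_pow_mul_gammaDen hlam hr 2).const_mul B))
    (measurable_gammaDen.aestronglyMeasurable.mul hφm)
    (ae_restrict_of_forall_mem measurableSet_Ioi fun x hx => ?_)
  have hg := (gammaDen_pos hlam hr hx).le
  calc ‖gammaDen lam r x * φ x‖ = gammaDen lam r x * |φ x| := by
        rw [Real.norm_eq_abs, abs_mul, abs_of_nonneg hg]
    _ ≤ gammaDen lam r x * (A + B * x ^ 2) := by gcongr; exact hφ x hx
    _ = _ := by ring

end GammaDensity

lemma LipschitzOnWith.sub_const {X : Type*} [PseudoMetricSpace X] {s : Set X} {K : ℝ≥0}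
    {φ : X → ℝ} (hφ : LipschitzOnWith K φ s) (c : ℝ) : LipschitzOnWith K (fun x => φ x - c) s :=
  LipschitzOnWith.of_dist_le_mul fun x hx y hy => by
    simpa only [dist_sub_right] using hφ.dist_le_mul x hx y hy

section LipschitzOnIoi

variable {lam r : ℝ} {K : ℝ≥0} {φ : ℝ → ℝ}

lemma LipschitzOnWith.comp_const_add_Ioi (hφ : LipschitzOnWith K φ (Ioi 0)) {a : ℝ}
    (ha : 0 ≤ a) : LipschitzOnWith K (fun t => φ (a + t)) (Ioi 0) :=
  LipschitzOnWith.of_dist_le_mul fun t ht u hu => by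
    simpa only [dist_add_left] using hφ.dist_le_mul (a + t) (add_pos_of_nonneg_of_pos ha ht)
      (a + u) (add_pos_of_nonneg_of_pos ha hu)

lemma abs_le_of_lipschitzOnWith_Ioi (hφ : LipschitzOnWith K φ (Ioi 0)) {x : ℝ} (hx : 0 < x) :
    |φ x| ≤ (|φ 1| + K) + K * x := by
  have h := hφ.dist_le_mul x hx 1 (mem_Ioi.2 one_pos)
  rw [Real.dist_eq, Real.dist_eq] at h
  have h1 : |x - 1| ≤ 1 + x := abs_le.2 ⟨by linarith, by linarith⟩
  have h2 : |φ x| ≤ |φ 1| + |φ x - φ 1| := by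
    simpa using abs_add_le (φ 1) (φ x - φ 1)
  nlinarith [mul_le_mul_of_nonneg_left h1 K.coe_nonneg]

lemma integrableOn_gammaDen_mul_of_lipschitzOnWith (hlam : 0 < lam) (hr : 0 < r)
    (hφ : LipschitzOnWith K φ (Ioi 0)) :
    IntegrableOn (fun x => gammaDen lam r x * φ x) (Ioi 0) := by
  refine integrableOn_gammaDen_mul_of_abs_le hlam hr
    (hφ.continuousOn.aestronglyMeasurable measurableSet_Ioi) (A := |φ 1| + 2 * K) (B := K)
    fun x hx => (abs_le_of_lipschitzOnWith_Ioi hφ hx).trans ?_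
  nlinarith [K.coe_nonneg, sq_nonneg (x - 1)]

lemma integrableOn_gammaDen_mul_sq_of_lipschitzOnWith (hlam : 0 < lam) (hr : 0 < r)
    (hφ : LipschitzOnWith K φ (Ioi 0)) :
    IntegrableOn (fun x => gammaDen lam r x * φ x ^ 2) (Ioi 0) := by
  refine integrableOn_gammaDen_mul_of_abs_le hlam hr
    ((hφ.continuousOn.pow 2).aestronglyMeasurable measurableSet_Ioi)
    (A := 2 * (|φ 1| + K) ^ 2) (B := 2 * K ^ 2) fun x hx => ?_
  have h := abs_le_of_lipschitzOnWith_Ioi hφ hx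
  rw [abs_pow]
  nlinarith [pow_le_pow_left₀ (abs_nonneg (φ x)) h 2, sq_nonneg ((|φ 1| + K) - K * x)]

end LipschitzOnIoi

section ProbabilityWeight

variable {Ω : Type*} [MeasurableSpace Ω] {μ : Measure Ω} {w φ : Ω → ℝ}

lemma integral_mul_sub_sq (hw : Integrable w μ) (hw1 : ∫ x, w x ∂μ = 1)
    (h1 : Integrable (fun x => w x * φ x) μ) (h2 : Integrable (fun x => w x * φ x ^ 2) μ)
    (c : ℝ) :
    ∫ x, w x * (φ x - c) ^ 2 ∂μ =
      ∫ x, w x * (φ x - ∫ y, w y * φ y ∂μ) ^ 2 ∂μ + (∫ y, w y * φ y ∂μ - c) ^ 2 := by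
  have expand : ∀ c : ℝ, ∫ x, w x * (φ x - c) ^ 2 ∂μ =
      ∫ x, w x * φ x ^ 2 ∂μ - 2 * c * ∫ x, w x * φ x ∂μ + c ^ 2 := by
    intro c
    have h21 : Integrable (fun x => w x * φ x ^ 2 - 2 * c * (w x * φ x)) μ :=
      h2.sub (h1.const_mul _)
    simp_rw [show ∀ x, w x * (φ x - c) ^ 2 = w x * φ x ^ 2 - 2 * c * (w x * φ x) + c ^ 2 * w x
      from fun x => by ring]
    rw [integral_add h21 (hw.const_mul _), integral_sub h2 (h1.const_mul _), integral_const_mul,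
      integral_const_mul, hw1]
    ring
  rw [expand, expand]
  ring

lemma sq_integral_mul_le (hw0 : 0 ≤ᵐ[μ] w) (hw : Integrable w μ) (hw1 : ∫ x, w x ∂μ = 1)
    (h1 : Integrable (fun x => w x * φ x) μ) (h2 : Integrable (fun x => w x * φ x ^ 2) μ) :
    (∫ x, w x * φ x ∂μ) ^ 2 ≤ ∫ x, w x * φ x ^ 2 ∂μ := by
  have h := integral_mul_sub_sq hw hw1 h1 h2 0
  simp only [sub_zero] at h
  have hvar : 0 ≤ ∫ x, w x * (φ x - ∫ y, w y * φ y ∂μ) ^ 2 ∂μ :=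
    integral_nonneg_of_ae (hw0.mono fun x hx => mul_nonneg hx (sq_nonneg _))
  linarith

lemma integral_mul_abs_sub_le_sqrt (hw0 : 0 ≤ᵐ[μ] w) (hw : Integrable w μ)
    (hw1 : ∫ x, w x ∂μ = 1) (h1 : Integrable (fun x => w x * φ x) μ)
    (h2 : Integrable (fun x => w x * φ x ^ 2) μ) (c : ℝ) :
    ∫ x, w x * |φ x - ∫ y, w y * φ y ∂μ| ∂μ ≤ √(∫ x, w x * (φ x - c) ^ 2 ∂μ) := by
  set m := ∫ y, w y * φ y ∂μ
  have hsq : Integrable (fun x => w x * |φ x - m| ^ 2) μ :=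
    ((h2.sub (h1.const_mul (2 * m))).add (hw.const_mul (m ^ 2))).congr
      (ae_of_all _ fun x => by simp only [Pi.add_apply, Pi.sub_apply, sq_abs]; ring)
  have habs : Integrable (fun x => w x * |φ x - m|) μ :=
    (h1.sub (hw.mul_const m)).abs.congr (hw0.mono fun x hx => by
      simp only [Pi.sub_apply]
      rw [← mul_sub, abs_mul, abs_of_nonneg hx])
  have hcs := sq_integral_mul_le hw0 hw hw1 habs hsq
  simp only [sq_abs] at hcs
  refine (le_abs_self _).trans (Real.abs_le_sqrt (hcs.trans ?_))
  rw [integral_mul_sub_sq hw hw1 h1 h2 c]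
  exact le_add_of_nonneg_right (sq_nonneg _)

end ProbabilityWeight

lemma integral_gammaDen_mul_abs_sub_le {lam r : ℝ} {K : ℝ≥0} {φ : ℝ → ℝ} (hlam : 0 < lam)
    (hr : 0 < r) (hφ : LipschitzOnWith K φ (Ioi 0)) :
    ∫ x in Ioi 0, gammaDen lam r x * |φ x - ∫ y in Ioi 0, gammaDen lam r y * φ y| ≤
      K * √r / lam := by
  set m := r / lam
  have hm : m ∈ Ioi 0 := div_pos hr hlam
  have hdev : ∫ x in Ioi 0, gammaDen lam r x * (φ x - φ m) ^ 2 ≤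
      ∫ x in Ioi 0, (K : ℝ) ^ 2 * (gammaDen lam r x * (x - m) ^ 2) := by
    refine setIntegral_mono_on
      (integrableOn_gammaDen_mul_sq_of_lipschitzOnWith hlam hr (hφ.sub_const _))
      ((integrableOn_gammaDen_mul_sq_of_lipschitzOnWith hlam hr
        (LipschitzWith.id.lipschitzOnWith.sub_const m)).const_mul _)
      measurableSet_Ioi fun x hx => ?_
    have h := hφ.dist_le_mul x hx m hm
    rw [Real.dist_eq, Real.dist_eq] at h
    have h2 := pow_le_pow_left₀ (abs_nonneg _) h 2
    rw [sq_abs, mul_pow, sq_abs] at h2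
    nlinarith [(gammaDen_pos hlam hr hx).le]
  refine (integral_mul_abs_sub_le_sqrt
    (ae_restrict_of_forall_mem measurableSet_Ioi fun x hx => (gammaDen_pos hlam hr hx).le)
    (integrableOn_gammaDen hlam hr) (integral_gammaDen hlam hr)
    (integrableOn_gammaDen_mul_of_lipschitzOnWith hlam hr hφ)
    (integrableOn_gammaDen_mul_sq_of_lipschitzOnWith hlam hr hφ) (φ m)).trans ?_
  calc √(∫ x in Ioi 0, gammaDen lam r x * (φ x - φ m) ^ 2)
      ≤ √((K : ℝ) ^ 2 * (r / lam ^ 2)) := by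
        gcongr
        rwa [integral_const_mul, integral_gammaDen_mul_sub_sq hlam hr] at hdev
    _ = K * √r / lam := by
        rw [Real.sqrt_mul (sq_nonneg _), Real.sqrt_sq K.coe_nonneg,
          Real.sqrt_div' _ (sq_nonneg _), Real.sqrt_sq hlam.le, mul_div_assoc]

lemma tvDist_gammaDen_gammaDen_mul_div_le {lam r H : ℝ} {K : ℝ≥0} {φ : ℝ → ℝ} (hlam : 0 < lam)
    (hr : 0 < r) (hH : 0 < H) (hφ : LipschitzOnWith K φ (Ioi 0))
    (hlow : ∀ x ∈ Ioi 0, H ≤ φ x) :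
    tvDist (gammaDen lam r)
        (fun x => gammaDen lam r x * φ x / ∫ u in Ioi 0, gammaDen lam r u * φ u) ≤
      K * √r / (2 * H * lam) := by
  set Z := ∫ u in Ioi 0, gammaDen lam r u * φ u
  have hZ : H ≤ Z :=
    calc H = ∫ u in Ioi 0, gammaDen lam r u * H := by
          rw [integral_mul_const, integral_gammaDen hlam hr, one_mul]
      _ ≤ Z := setIntegral_mono_on ((integrableOn_gammaDen hlam hr).mul_const H)
          (integrableOn_gammaDen_mul_of_lipschitzOnWith hlam hr hφ) measurableSet_Ioi
          fun u hu => mul_le_mul_of_nonneg_left (hlow u hu) (gammaDen_pos hlam hr hu).le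
  have hZ0 : 0 < Z := hH.trans_le hZ
  have hpt : ∀ x ∈ Ioi 0, |gammaDen lam r x - gammaDen lam r x * φ x / Z| =
      Z⁻¹ * (gammaDen lam r x * |φ x - Z|) := by
    intro x hx
    rw [show gammaDen lam r x - gammaDen lam r x * φ x / Z =
        Z⁻¹ * (gammaDen lam r x * (Z - φ x)) by field_simp,
      abs_mul, abs_mul, abs_of_pos (inv_pos.2 hZ0), abs_of_pos (gammaDen_pos hlam hr hx),
      abs_sub_comm]
  have hdev := integral_gammaDen_mul_abs_sub_le hlam hr hφ
  have hdev0 : 0 ≤ ∫ x in Ioi 0, gammaDen lam r x * |φ x - Z| :=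
    setIntegral_nonneg measurableSet_Ioi fun x hx =>
      mul_nonneg (gammaDen_pos hlam hr hx).le (abs_nonneg _)
  rw [tvDist, setIntegral_congr_fun measurableSet_Ioi hpt, integral_const_mul]
  calc 1 / 2 * (Z⁻¹ * ∫ x in Ioi 0, gammaDen lam r x * |φ x - Z|)
      ≤ 1 / 2 * (H⁻¹ * (K * √r / lam)) := by gcongr
    _ = K * √r / (2 * H * lam) := by field_simp

lemma lipschitzOnWith_lipNorm {h : ℝ → ℝ} (hh : LipOn h) :
    LipschitzOnWith (lipNorm h).toNNReal h (Ioi 0) := by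
  refine LipschitzOnWith.of_dist_le' fun x hx x' hx' => ?_
  rcases eq_or_ne x x' with rfl | hne
  · simp
  have hpos : 0 < |x - x'| := abs_pos.2 (sub_ne_zero.2 hne)
  rw [Real.dist_eq, Real.dist_eq, ← div_le_iff₀ hpos]
  exact le_csInf hh fun K hK => (div_le_iff₀ hpos).2 (hK.2 x hx x' hx')

noncomputable def gammaAvg (lam r b : ℝ) (φ : ℝ → ℝ) (x : ℝ) : ℝ :=
  ∫ t in Ioi 0, gammaDen lam r t * φ (x / b + t)

section GammaAvg

variable {lam r b : ℝ} {K : ℝ≥0} {φ : ℝ → ℝ}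

lemma gammaAvg_const_mul (C : ℝ) (φ : ℝ → ℝ) (x : ℝ) :
    gammaAvg lam r b (fun s => C * φ s) x = C * gammaAvg lam r b φ x := by
  simp only [gammaAvg, mul_left_comm _ C, integral_const_mul]

lemma gammaAvg_const (hlam : 0 < lam) (hr : 0 < r) (C : ℝ) :
    gammaAvg lam r b (fun _ => C) = fun _ => C := by
  ext x
  simp only [gammaAvg, integral_mul_const, integral_gammaDen hlam hr, one_mul]

lemma integrableOn_gammaDen_mul_comp_add (hlam : 0 < lam) (hr : 0 < r)
    (hφ : LipschitzOnWith K φ (Ioi 0)) {a : ℝ} (ha : 0 ≤ a) :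
    IntegrableOn (fun t => gammaDen lam r t * φ (a + t)) (Ioi 0) :=
  integrableOn_gammaDen_mul_of_lipschitzOnWith hlam hr (hφ.comp_const_add_Ioi ha)

lemma le_gammaAvg (hlam : 0 < lam) (hr : 0 < r) (hb : 0 < b) (hφ : LipschitzOnWith K φ (Ioi 0))
    {H : ℝ} (hH : ∀ x ∈ Ioi 0, H ≤ φ x) {x : ℝ} (hx : x ∈ Ioi 0) :
    H ≤ gammaAvg lam r b φ x := by
  have ha : 0 < x / b := div_pos hx hb
  calc H = ∫ t in Ioi 0, gammaDen lam r t * H := by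
        rw [integral_mul_const, integral_gammaDen hlam hr, one_mul]
    _ ≤ gammaAvg lam r b φ x :=
        setIntegral_mono_on ((integrableOn_gammaDen hlam hr).mul_const H)
          (integrableOn_gammaDen_mul_comp_add hlam hr hφ ha.le) measurableSet_Ioi fun t ht =>
            mul_le_mul_of_nonneg_left (hH _ (add_pos ha ht)) (gammaDen_pos hlam hr ht).le

lemma lipschitzOnWith_gammaAvg (hlam : 0 < lam) (hr : 0 < r) (hb : 0 < b)
    (hφ : LipschitzOnWith K φ (Ioi 0)) :
    LipschitzOnWith (K / b.toNNReal) (gammaAvg lam r b φ) (Ioi 0) := by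
  refine LipschitzOnWith.of_dist_le_mul fun x hx y hy => ?_
  have hx' : 0 < x / b := div_pos hx hb
  have hy' : 0 < y / b := div_pos hy hb
  have hd : dist (x / b) (y / b) = dist x y / b := by
    rw [Real.dist_eq, Real.dist_eq, ← sub_div, abs_div, abs_of_pos hb]
  rw [NNReal.coe_div, Real.coe_toNNReal _ hb.le, Real.dist_eq, gammaAvg, gammaAvg,
    ← integral_sub (integrableOn_gammaDen_mul_comp_add hlam hr hφ hx'.le)
      (integrableOn_gammaDen_mul_comp_add hlam hr hφ hy'.le)]
  calc ‖∫ t in Ioi 0, (gammaDen lam r t * φ (x / b + t) - gammaDen lam r t * φ (y / b + t))‖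
      ≤ ∫ t in Ioi 0, gammaDen lam r t * (K / b * dist x y) := by
        refine norm_integral_le_of_norm_le ((integrableOn_gammaDen hlam hr).mul_const _)
          (ae_restrict_of_forall_mem measurableSet_Ioi fun t ht => ?_)
        have hg := (gammaDen_pos hlam hr ht).le
        have h := hφ.dist_le_mul _ (add_pos hx' ht) _ (add_pos hy' ht)
        rw [dist_add_right, hd] at h
        rw [← mul_sub, norm_mul, Real.norm_of_nonneg hg, ← dist_eq_norm]
        exact mul_le_mul_of_nonneg_left (h.trans_eq (by ring)) hg
    _ = K / b * dist x y := by rw [integral_mul_const, integral_gammaDen hlam hr, one_mul]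

end GammaAvg

section Conjugacy

variable {α β b μ : ℝ}

lemma pKer_mul_gammaDen (hα : 0 < α) (hβ : 0 < β) (hb : 0 < b) (hμ : 0 < μ) {x s : ℝ}
    (hx : 0 < x) (hs : x / b ≤ s) :
    pKer α β b s x * gammaDen μ (α + β) s =
      gammaDen (μ / b) α x * gammaDen μ β (s - x / b) := by
  have hs0 : 0 < s := (div_pos hx hb).trans_le hs
  have ht : 0 ≤ s - x / b := sub_nonneg.2 hs
  rw [pKer, if_pos ⟨hx.le, (div_le_iff₀' hb).1 hs⟩]
  have e1 : b * s - x = b * (s - x / b) := by field_simp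
  have e2 : (b * s) ^ (1 - (α + β)) =
      (b ^ (β - 1))⁻¹ * (b ^ α)⁻¹ * (s ^ (α + β - 1))⁻¹ := by
    rw [Real.mul_rpow hb.le hs0.le, ← Real.rpow_neg hb.le, ← Real.rpow_neg hb.le,
      ← Real.rpow_add hb, ← Real.rpow_neg hs0.le]
    ring_nf
  have e3 : (μ / b) ^ α = μ ^ α * (b ^ α)⁻¹ := by
    rw [Real.div_rpow hμ.le hb.le, div_eq_mul_inv]
  have e4 : Real.exp (-(μ * s)) =
      Real.exp (-(μ / b * x)) * Real.exp (-(μ * (s - x / b))) := by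
    rw [← Real.exp_add]; congr 1; field_simp; ring
  rw [e1, Real.mul_rpow hb.le ht, e2]
  simp only [gammaDen, e3, e4, Real.rpow_add hμ]
  have := Real.Gamma_pos_of_pos hα
  have := Real.Gamma_pos_of_pos hβ
  have := Real.Gamma_pos_of_pos (add_pos hα hβ)
  have := Real.rpow_pos_of_pos hs0 (α + β - 1)
  have := Real.rpow_pos_of_pos hb (β - 1)
  have := Real.rpow_pos_of_pos hb α
  field_simp

lemma integral_pKer_mul_gammaDen_mul (hα : 0 < α) (hβ : 0 < β) (hb : 0 < b) (hμ : 0 < μ)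
    {x : ℝ} (hx : 0 < x) (φ : ℝ → ℝ) :
    ∫ s in Ioi 0, pKer α β b s x * (gammaDen μ (α + β) s * φ s) =
      gammaDen (μ / b) α x * gammaAvg μ β b φ x := by
  set c := x / b
  have hc : 0 < c := div_pos hx hb
  have hshift : (fun t => c + t) ⁻¹' Ici c = Ici 0 := by ext t; simp
  calc ∫ s in Ioi 0, pKer α β b s x * (gammaDen μ (α + β) s * φ s)
      = ∫ s in Ici c, pKer α β b s x * (gammaDen μ (α + β) s * φ s) :=
        setIntegral_eq_of_subset_of_forall_sdiff_eq_zero measurableSet_Ioi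
          (fun s hs => hc.trans_le hs) fun s hs => by
            have hlt : b * s < x := by
              have := hs.2; rw [mem_Ici, not_le, lt_div_iff₀ hb] at this; linarith
            simp [pKer, not_le.2 hlt]
    _ = ∫ s in Ici c, gammaDen (μ / b) α x * (gammaDen μ β (s - c) * φ s) :=
        setIntegral_congr_fun measurableSet_Ici fun s hs => by
          rw [← mul_assoc, pKer_mul_gammaDen hα hβ hb hμ hx hs, mul_assoc]
    _ = ∫ t in Ici 0, gammaDen (μ / b) α x * (gammaDen μ β t * φ (c + t)) := by
        rw [← hshift, ← (measurePreserving_add_left volume c).setIntegral_preimage_emb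
          (measurableEmbedding_addLeft c)]
        simp only [add_sub_cancel_left]
    _ = gammaDen (μ / b) α x * gammaAvg μ β b φ x := by
        rw [integral_Ici_eq_integral_Ioi, integral_const_mul, gammaAvg]

lemma gObs_mul_gammaDen {ν y : ℝ} (hα : 0 < α) (hβ : 0 < β) (hνy : 0 < ν + y) {x : ℝ}
    (hx : 0 < x) :
    gObs β x y * gammaDen ν α x =
      y ^ (β - 1) * ν ^ α * Real.Gamma (α + β) /
        (Real.Gamma α * Real.Gamma β * (ν + y) ^ (α + β)) * gammaDen (ν + y) (α + β) x := by
  have e1 : x ^ β * x ^ (α - 1) = x ^ (α + β - 1) := by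
    rw [← Real.rpow_add hx]; ring_nf
  have e2 : Real.exp (-(x * y)) * Real.exp (-(ν * x)) = Real.exp (-((ν + y) * x)) := by
    rw [← Real.exp_add]; ring_nf
  have := Real.Gamma_pos_of_pos hα
  have := Real.Gamma_pos_of_pos hβ
  have := Real.Gamma_pos_of_pos (add_pos hα hβ)
  have := Real.rpow_pos_of_pos hνy (α + β)
  simp only [gObs, gammaDen, ← e1, ← e2]
  field_simp

end Conjugacy

noncomputable def filterRate (lam b : ℝ) (y : ℕ → ℝ) : ℕ → ℝ
  | 0 => lam
  | n + 1 => filterRate lam b y n / b + y (n + 1)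

noncomputable def filterRatio (β lam b : ℝ) (y : ℕ → ℝ) (φ : ℝ → ℝ) : ℕ → ℝ → ℝ
  | 0 => φ
  | n + 1 => gammaAvg (filterRate lam b y n) β b (filterRatio β lam b y φ n)

lemma eq_div_setIntegral_of_eq_const_mul {X : Type*} [MeasurableSpace X] {μ : Measure X}
    {s : Set X} (hs : MeasurableSet s) {f g : X → ℝ} {C : ℝ} (hf : ∀ x ∈ s, f x = C * g x)
    (h1 : ∫ x in s, f x ∂μ = 1) : ∀ x ∈ s, f x = g x / ∫ x in s, g x ∂μ := by
  rw [setIntegral_congr_fun hs hf, integral_const_mul] at h1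
  intro x hx
  rw [hf x hx, eq_inv_of_mul_eq_one_left h1, inv_mul_eq_div]

section Filter

variable {α β b lam : ℝ} {y : ℕ → ℝ}

lemma filterRate_pos (hb : 0 < b) (hlam : 0 < lam) (hy : ∀ j, 1 ≤ j → 0 < y j) :
    ∀ n, 0 < filterRate lam b y n
  | 0 => hlam
  | n + 1 => add_pos (div_pos (filterRate_pos hb hlam hy n) hb) (hy (n + 1) n.succ_pos)

lemma filterRate_eq (hb : b ≠ 0) (n : ℕ) :
    filterRate lam b y n = lam / b ^ n + ∑ j ∈ Finset.Icc 1 n, y j * b ^ j / b ^ n := by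
  induction n with
  | zero => simp [filterRate]
  | succ n ih =>
    rw [filterRate, ih, Finset.sum_Icc_succ_top (by omega), ← Finset.sum_div, ← Finset.sum_div]
    field_simp
    ring

lemma filterRatio_const (hβ : 0 < β) (hb : 0 < b) (hlam : 0 < lam) (hy : ∀ j, 1 ≤ j → 0 < y j)
    (C : ℝ) : ∀ n, filterRatio β lam b y (fun _ => C) n = fun _ => C
  | 0 => rfl
  | n + 1 => by
    rw [filterRatio, filterRatio_const hβ hb hlam hy C n,
      gammaAvg_const (filterRate_pos hb hlam hy n) hβ]

lemma lipschitzOnWith_filterRatio (hβ : 0 < β) (hb : 0 < b) (hlam : 0 < lam)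
    (hy : ∀ j, 1 ≤ j → 0 < y j) {K : ℝ≥0} {φ : ℝ → ℝ} (hφ : LipschitzOnWith K φ (Ioi 0)) :
    ∀ n, LipschitzOnWith (K / b.toNNReal ^ n) (filterRatio β lam b y φ n) (Ioi 0)
  | 0 => by simpa [filterRatio] using hφ
  | n + 1 => by
    rw [pow_succ, ← div_div]
    exact lipschitzOnWith_gammaAvg (filterRate_pos hb hlam hy n) hβ hb
      (lipschitzOnWith_filterRatio hβ hb hlam hy hφ n)

lemma le_filterRatio (hβ : 0 < β) (hb : 0 < b) (hlam : 0 < lam)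
    (hy : ∀ j, 1 ≤ j → 0 < y j) {K : ℝ≥0} {φ : ℝ → ℝ} (hφ : LipschitzOnWith K φ (Ioi 0))
    {H : ℝ} (hH : ∀ x ∈ Ioi 0, H ≤ φ x) : ∀ n, ∀ x ∈ Ioi 0, H ≤ filterRatio β lam b y φ n x
  | 0 => hH
  | n + 1 => fun _ hx =>
    le_gammaAvg (filterRate_pos hb hlam hy n) hβ hb
      (lipschitzOnWith_filterRatio hβ hb hlam hy hφ n) (le_filterRatio hβ hb hlam hy hφ hH n) hx

lemma exists_filter_eq_const_mul (hα : 0 < α) (hβ : 0 < β) (hb : 0 < b) (hlam : 0 < lam)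
    (hy : ∀ j, 1 ≤ j → 0 < y j) {φ : ℝ → ℝ} {f : ℕ → ℝ → ℝ} {c : ℕ → ℝ}
    (h0 : ∀ x ∈ Ioi 0, f 0 x = gammaDen lam (α + β) x * φ x)
    (hrec : ∀ n, ∀ x ∈ Ioi 0,
      f (n + 1) x = gObs β x (y (n + 1)) * (∫ s in Ioi 0, pKer α β b s x * f n s) / c (n + 1)) :
    ∀ n, ∃ C, ∀ x ∈ Ioi 0,
      f n x = C * (gammaDen (filterRate lam b y n) (α + β) x * filterRatio β lam b y φ n x)
  | 0 => ⟨1, fun x hx => by rw [one_mul, h0 x hx, filterRate, filterRatio]⟩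
  | n + 1 => by
    obtain ⟨C, hC⟩ := exists_filter_eq_const_mul hα hβ hb hlam hy h0 hrec n
    set μ := filterRate lam b y n
    have hμ : 0 < μ := filterRate_pos hb hlam hy n
    have hyn : 0 < y (n + 1) := hy (n + 1) n.succ_pos
    refine ⟨y (n + 1) ^ (β - 1) * (μ / b) ^ α * Real.Gamma (α + β) /
      (Real.Gamma α * Real.Gamma β * (μ / b + y (n + 1)) ^ (α + β)) * C / c (n + 1),
      fun x hx => ?_⟩
    have hpred : ∫ s in Ioi 0, pKer α β b s x * f n s =
        gammaDen (μ / b) α x * (C * filterRatio β lam b y φ (n + 1) x) := by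
      rw [setIntegral_congr_fun measurableSet_Ioi fun s hs => by rw [hC s hs, mul_left_comm C],
        integral_pKer_mul_gammaDen_mul hα hβ hb hμ hx, gammaAvg_const_mul, filterRatio]
    rw [hrec n x hx, hpred, ← mul_assoc, gObs_mul_gammaDen hα hβ (by positivity) hx, filterRate]
    ring

lemma filter_eq_gammaDen_mul_div (hα : 0 < α) (hβ : 0 < β) (hb : 0 < b) (hlam : 0 < lam)
    (hy : ∀ j, 1 ≤ j → 0 < y j) {φ : ℝ → ℝ} {f : ℕ → ℝ → ℝ} {c : ℕ → ℝ}
    (h0 : ∀ x ∈ Ioi 0, f 0 x = gammaDen lam (α + β) x * φ x)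
    (hrec : ∀ n, ∀ x ∈ Ioi 0,
      f (n + 1) x = gObs β x (y (n + 1)) * (∫ s in Ioi 0, pKer α β b s x * f n s) / c (n + 1))
    (hnorm : ∀ n, ∫ x in Ioi 0, f (n + 1) x = 1) {n : ℕ} (hn : 1 ≤ n) :
    ∀ x ∈ Ioi 0, f n x =
      gammaDen (filterRate lam b y n) (α + β) x * filterRatio β lam b y φ n x /
        ∫ u in Ioi 0, gammaDen (filterRate lam b y n) (α + β) u * filterRatio β lam b y φ n u := by
  obtain ⟨m, rfl⟩ := Nat.exists_eq_add_of_le' hn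
  obtain ⟨C, hC⟩ := exists_filter_eq_const_mul hα hβ hb hlam hy h0 hrec (m + 1)
  exact eq_div_setIntegral_of_eq_const_mul measurableSet_Ioi hC (hnorm m)

end Filter

theorem gamma_initial_stability_bound_general
    (α β b lam H : ℝ) (hα : 0 < α) (hβ : 0 < β) (hb : 0 < b) (hlam : 0 < lam) (hH : 0 < H)
    (y : ℕ → ℝ) (hy : ∀ j, 1 ≤ j → 0 < y j)
    (π0t : ℝ → ℝ)
    (hLip : LipOn fun x => π0t x / gammaDen lam (α + β) x)
    (hlow : ∀ x ∈ Set.Ioi (0 : ℝ), H ≤ π0t x / gammaDen lam (α + β) x)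
    (π πt : ℕ → ℝ → ℝ) (c ct : ℕ → ℝ)
    (hπ0 : ∀ x ∈ Set.Ioi (0 : ℝ), π 0 x = gammaDen lam (α + β) x)
    (hπt0 : ∀ x ∈ Set.Ioi (0 : ℝ), πt 0 x = π0t x)
    (hrec : ∀ n, ∀ x ∈ Set.Ioi (0 : ℝ),
      π (n + 1) x =
        gObs β x (y (n + 1)) * (∫ s in Set.Ioi (0 : ℝ), pKer α β b s x * π n s) / c (n + 1))
    (hrect : ∀ n, ∀ x ∈ Set.Ioi (0 : ℝ),
      πt (n + 1) x =
        gObs β x (y (n + 1)) * (∫ s in Set.Ioi (0 : ℝ), pKer α β b s x * πt n s) / ct (n + 1))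
    (hnorm : ∀ n, (∫ x in Set.Ioi (0 : ℝ), π (n + 1) x) = 1)
    (hnormt : ∀ n, (∫ x in Set.Ioi (0 : ℝ), πt (n + 1) x) = 1) :
    ∀ n, 1 ≤ n →
      tvDist (π n) (πt n) ≤
        Real.sqrt (2 * (α + β)) * lipNorm (fun x => π0t x / gammaDen lam (α + β) x) / (2 * H) *
          (b ^ n * (lam / b ^ n + ∑ j ∈ Finset.Icc 1 n, y j * b ^ j / b ^ n))⁻¹ := by
  intro n hn
  set h0 := fun x => π0t x / gammaDen lam (α + β) x
  have hq : 0 < α + β := add_pos hα hβ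
  have hL : 0 < filterRate lam b y n := filterRate_pos hb hlam hy n
  have hK := lipschitzOnWith_lipNorm hLip
  have hK0 : 0 ≤ lipNorm h0 := Real.sInf_nonneg fun _ hK => hK.1
  have hπ := filter_eq_gammaDen_mul_div hα hβ hb hlam hy (φ := fun _ => 1)
    (fun x hx => by rw [hπ0 x hx, mul_one]) hrec hnorm hn
  simp only [filterRatio_const hβ hb hlam hy, mul_one, integral_gammaDen hL hq, div_one] at hπ
  have hπt := filter_eq_gammaDen_mul_div hα hβ hb hlam hy (φ := h0)
    (fun x hx => by rw [hπt0 x hx, mul_div_cancel₀ _ (gammaDen_pos hlam hq hx).ne']) hrect hnormt hn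
  have hKn : ((lipNorm h0).toNNReal / b.toNNReal ^ n : ℝ≥0) = lipNorm h0 / b ^ n := by
    rw [NNReal.coe_div, NNReal.coe_pow, Real.coe_toNNReal _ hK0, Real.coe_toNNReal _ hb.le]
  rw [← filterRate_eq hb.ne']
  set L := filterRate lam b y n
  rw [tvDist,
    setIntegral_congr_fun measurableSet_Ioi fun x hx => by rw [hπ x hx, hπt x hx], ← tvDist]
  calc _ ≤ lipNorm h0 / b ^ n * √(α + β) / (2 * H * L) := hKn ▸
        tvDist_gammaDen_gammaDen_mul_div_le hL hq hH
          (lipschitzOnWith_filterRatio hβ hb hlam hy hK n) (le_filterRatio hβ hb hlam hy hK hlow n)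
    _ ≤ lipNorm h0 / b ^ n * √(2 * (α + β)) / (2 * H * L) := by gcongr; linarith
    _ = _ := by field_simp

/-- Stability estimate (8): starting from a `Γ(λ, q)` initial density `π₀` and a
true initial density `π̃₀` with `π₀`-density `h₀` Lipschitz and bounded below by
`H > 0`, the filters satisfy
`‖π_n - π̃_n‖_var ≤ (√(2q) ‖h₀‖_Lip / (2H)) (bⁿ λ_n)⁻¹`. -/
theorem gamma_initial_stability_bound
    (α β b lam H : ℝ) (hα : 0 < α) (hβ : 0 < β) (hb : 0 < b) (hlam : 0 < lam) (hH : 0 < H)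
    (y : ℕ → ℝ) (hy : ∀ j, 1 ≤ j → 0 < y j)
    (π0t : ℝ → ℝ) (hπ0t_nonneg : ∀ x ∈ Set.Ioi (0 : ℝ), 0 ≤ π0t x)
    (hπ0t_norm : (∫ x in Set.Ioi (0 : ℝ), π0t x) = 1)
    (hLip : LipOn fun x => π0t x / gammaDen lam (α + β) x)
    (hlow : ∀ x ∈ Set.Ioi (0 : ℝ), H ≤ π0t x / gammaDen lam (α + β) x)
    (π πt : ℕ → ℝ → ℝ) (c ct : ℕ → ℝ)
    (hc : ∀ n, 0 < c (n + 1)) (hct : ∀ n, 0 < ct (n + 1))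
    (hπ0 : ∀ x ∈ Set.Ioi (0 : ℝ), π 0 x = gammaDen lam (α + β) x)
    (hπt0 : ∀ x ∈ Set.Ioi (0 : ℝ), πt 0 x = π0t x)
    (hrec : ∀ n, ∀ x ∈ Set.Ioi (0 : ℝ),
      π (n + 1) x =
        gObs β x (y (n + 1)) * (∫ s in Set.Ioi (0 : ℝ), pKer α β b s x * π n s) / c (n + 1))
    (hrect : ∀ n, ∀ x ∈ Set.Ioi (0 : ℝ),
      πt (n + 1) x =
        gObs β x (y (n + 1)) * (∫ s in Set.Ioi (0 : ℝ), pKer α β b s x * πt n s) / ct (n + 1))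
    (hnorm : ∀ n, (∫ x in Set.Ioi (0 : ℝ), π (n + 1) x) = 1)
    (hnormt : ∀ n, (∫ x in Set.Ioi (0 : ℝ), πt (n + 1) x) = 1) :
    ∀ n, 1 ≤ n →
      tvDist (π n) (πt n) ≤
        Real.sqrt (2 * (α + β)) * lipNorm (fun x => π0t x / gammaDen lam (α + β) x) / (2 * H) *
          (b ^ n * (lam / b ^ n + ∑ j ∈ Finset.Icc 1 n, y j * b ^ j / b ^ n))⁻¹ :=
  gamma_initial_stability_bound_general α β b lam H hα hβ hb hlam hH y hy π0t hLip hlow π πt c ct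
    hπ0 hπt0 hrec hrect hnorm hnormt
end

section
/- Assume E(X_0^β) < ∞. Then for every δ with 0 ≤ δ < E(W_1^β)^{−1/β}, almost surely b^j Y_j > δ^j for all sufficiently large j; that is, P(liminf_{j→∞} {b^j Y_j > δ^j}) = 1. -/
/-!
Put `Z n = X₀ W₀ ⋯ W_{n-1}`, so that `X n = bⁿ Z n` and `bⁿ⁺¹ Y (n+1) = G n / Z (n+1)`.
The Gamma tail `P(G ≤ t) ≤ t^β / Γ(β+1)` and the independence of `G n` from `Z (n+1)` give
`P(G n ≤ δⁿ⁺¹ Z (n+1)) ≤ E[X₀^β] (δ^β E[W₀^β])ⁿ⁺¹ / Γ(β+1)`, a geometric series because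
`δ^β E[W₀^β] < 1`, and Borel–Cantelli concludes.
-/

open MeasureTheory Set

/-- The Beta distribution `Beta(a, c)` on `(0, 1)`. -/
noncomputable def betaMeas (a c : ℝ) : Measure ℝ :=
  (volume : Measure ℝ).withDensity fun x =>
    ENNReal.ofReal
      (if 0 < x ∧ x < 1 then
        Real.Gamma (a + c) / (Real.Gamma a * Real.Gamma c) * x ^ (a - 1) * (1 - x) ^ (c - 1)
      else 0)

/-- The Gamma distribution `Γ(lam, r)` on `(0, ∞)` with rate `lam` and shape `r`. -/
noncomputable def gammaMeas (lam r : ℝ) : Measure ℝ :=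
  (volume : Measure ℝ).withDensity fun x =>
    ENNReal.ofReal
      (if 0 < x then lam ^ r * x ^ (r - 1) * Real.exp (-(lam * x)) / Real.Gamma r else 0)

open ProbabilityTheory Filter

lemma gammaMeas_Iic_le {lam r : ℝ} (hlam : 0 ≤ lam) (hr : 0 < r) {t : ℝ} (ht : 0 ≤ t) :
    gammaMeas lam r (Iic t) ≤ ENNReal.ofReal ((lam * t) ^ r / Real.Gamma (r + 1)) := by
  set g : ℝ → ℝ := fun x => lam ^ r * x ^ (r - 1) / Real.Gamma r
  have hg_int : IntegrableOn g (Ioc 0 t) := by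
    have := intervalIntegral.intervalIntegrable_rpow' (a := 0) (b := t)
      (show (-1 : ℝ) < r - 1 by linarith)
    rw [intervalIntegrable_iff_integrableOn_Ioc_of_le ht] at this
    exact (this.const_mul _).div_const _
  have hg_integral : ∫ x in Ioc 0 t, g x = (lam * t) ^ r / Real.Gamma (r + 1) := by
    rw [integral_div, integral_const_mul, ← intervalIntegral.integral_of_le ht,
      integral_rpow (Or.inl (by linarith)), sub_add_cancel, Real.zero_rpow hr.ne', sub_zero,
      Real.mul_rpow hlam ht, Real.Gamma_add_one hr.ne']
    field_simp
  rw [gammaMeas, withDensity_apply _ measurableSet_Iic, ← Iic_union_Ioc_eq_Iic ht,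
    lintegral_union measurableSet_Ioc (Iic_disjoint_Ioc le_rfl),
    setLIntegral_eq_zero measurableSet_Iic fun x (hx : x ≤ 0) => by simp [hx.not_gt], zero_add,
    ← hg_integral, ofReal_integral_eq_lintegral_ofReal hg_int
      (ae_restrict_of_forall_mem measurableSet_Ioc fun x hx =>
        div_nonneg (mul_nonneg (Real.rpow_nonneg hlam _) (Real.rpow_nonneg hx.1.le _))
          (Real.Gamma_pos_of_pos hr).le)]
  refine setLIntegral_mono' measurableSet_Ioc fun x hx => ENNReal.ofReal_le_ofReal ?_
  rw [if_pos hx.1]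
  have hexp : Real.exp (-(lam * x)) ≤ 1 := Real.exp_le_one_iff.2 (by nlinarith [hx.1])
  exact div_le_div_of_nonneg_right (mul_le_of_le_one_right (mul_nonneg
    (Real.rpow_nonneg hlam _) (Real.rpow_nonneg hx.1.le _)) hexp) (Real.Gamma_pos_of_pos hr).le

lemma ae_betaMeas_mem_Ioo (a c : ℝ) : ∀ᵐ x ∂betaMeas a c, x ∈ Ioo 0 1 := by
  change betaMeas a c (Ioo 0 1)ᶜ = 0
  rw [betaMeas, withDensity_apply _ measurableSet_Ioo.compl]
  exact setLIntegral_eq_zero measurableSet_Ioo.compl fun x hx => by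
    simp [if_neg (show ¬(0 < x ∧ x < 1) from hx)]

section GammaTail

variable {Ω : Type*} [MeasurableSpace Ω] {P : Measure Ω}

lemma measure_le_eq_lintegral_of_indepFun [IsFiniteMeasure P] {Z G : Ω → ℝ}
    (hZ : Measurable Z) (hG : Measurable G) (hZG : IndepFun Z G P) :
    P {ω | G ω ≤ Z ω} = ∫⁻ ω, P.map G (Iic (Z ω)) ∂P := by
  have hS : MeasurableSet {p : ℝ × ℝ | p.2 ≤ p.1} :=
    measurableSet_le measurable_snd measurable_fst
  have hmono : Monotone fun z => P.map G (Iic z) := fun _ _ h => measure_mono (Iic_subset_Iic.2 h)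
  calc P {ω | G ω ≤ Z ω} = P.map (fun ω => (Z ω, G ω)) {p | p.2 ≤ p.1} :=
        (Measure.map_apply (hZ.prodMk hG) hS).symm
    _ = ((P.map Z).prod (P.map G)) {p | p.2 ≤ p.1} := by
        rw [(indepFun_iff_map_prod_eq_prod_map_map hZ.aemeasurable hG.aemeasurable).1 hZG]
    _ = ∫⁻ z, P.map G (Iic z) ∂P.map Z := Measure.prod_apply hS
    _ = ∫⁻ ω, P.map G (Iic (Z ω)) ∂P := lintegral_map hmono.measurable hZ

lemma measure_le_mul_le_of_indepFun_gammaMeas [IsFiniteMeasure P] {Z G : Ω → ℝ}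
    {lam r c : ℝ} (hlam : 0 ≤ lam) (hr : 0 < r) (hc : 0 ≤ c)
    (hZ : Measurable Z) (hG : Measurable G) (hZ0 : 0 ≤ᵐ[P] Z) (hZG : IndepFun Z G P)
    (hGlaw : P.map G = gammaMeas lam r) :
    P {ω | G ω ≤ c * Z ω} ≤ ENNReal.ofReal ((lam * c) ^ r / Real.Gamma (r + 1)) *
      ∫⁻ ω, ENNReal.ofReal (Z ω ^ r) ∂P := by
  rw [measure_le_eq_lintegral_of_indepFun (hZ.const_mul c) hG
      (hZG.comp (measurable_const_mul c) measurable_id), hGlaw,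
    ← lintegral_const_mul' _ _ ENNReal.ofReal_ne_top]
  refine lintegral_mono_ae (hZ0.mono fun ω hω => (gammaMeas_Iic_le hlam hr
    (mul_nonneg hc hω)).trans_eq ?_)
  rw [← ENNReal.ofReal_mul (div_nonneg (Real.rpow_nonneg (mul_nonneg hlam hc) r)
    (Real.Gamma_pos_of_pos (by linarith)).le), ← mul_assoc,
    Real.mul_rpow (mul_nonneg hlam hc) hω, div_mul_eq_mul_div]

theorem ae_eventually_mul_lt_of_indepFun_gammaMeas [IsFiniteMeasure P] {Z G : ℕ → Ω → ℝ}
    {lam r : ℝ} {c : ℕ → ℝ} (hlam : 0 ≤ lam) (hr : 0 < r) (hc : ∀ n, 0 ≤ c n)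
    (hZ : ∀ n, Measurable (Z n)) (hG : ∀ n, Measurable (G n)) (hZ0 : ∀ n, 0 ≤ᵐ[P] Z n)
    (hZG : ∀ n, IndepFun (Z n) (G n) P) (hGlaw : ∀ n, P.map (G n) = gammaMeas lam r)
    (hsum : ∑' n, ENNReal.ofReal (c n ^ r) * ∫⁻ ω, ENNReal.ofReal (Z n ω ^ r) ∂P ≠ ⊤) :
    ∀ᵐ ω ∂P, ∀ᶠ n in atTop, c n * Z n ω < G n ω := by
  have hbound : ∀ n, P {ω | G n ω ≤ c n * Z n ω} ≤
      ENNReal.ofReal (lam ^ r / Real.Gamma (r + 1)) *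
        (ENNReal.ofReal (c n ^ r) * ∫⁻ ω, ENNReal.ofReal (Z n ω ^ r) ∂P) := fun n => by
    rw [← mul_assoc, ← ENNReal.ofReal_mul (div_nonneg (Real.rpow_nonneg hlam r)
      (Real.Gamma_pos_of_pos (by linarith)).le), div_mul_eq_mul_div,
      ← Real.mul_rpow hlam (hc n)]
    exact measure_le_mul_le_of_indepFun_gammaMeas hlam hr (hc n) (hZ n) (hG n) (hZ0 n) (hZG n)
      (hGlaw n)
  have hfin : ∑' n, P {ω | G n ω ≤ c n * Z n ω} ≠ ⊤ :=
    ne_top_of_le_ne_top (ENNReal.mul_ne_top ENNReal.ofReal_ne_top hsum)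
      ((ENNReal.tsum_le_tsum hbound).trans_eq ENNReal.tsum_mul_left)
  filter_upwards [ae_eventually_notMem hfin] with ω hω
  exact hω.mono fun n hn => not_le.1 hn

end GammaTail

lemma lintegral_ofReal_prod_rpow_of_iIndepFun {Ω ι : Type*} [MeasurableSpace Ω]
    {P : Measure Ω} {f : ι → Ω → ℝ} (hf : iIndepFun f P) (hfm : ∀ i, Measurable (f i))
    (s : Finset ι) (hs : ∀ i ∈ s, 0 ≤ᵐ[P] f i) (p : ℝ) :
    ∫⁻ ω, ENNReal.ofReal ((∏ i ∈ s, f i ω) ^ p) ∂P =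
      ∏ i ∈ s, ∫⁻ ω, ENNReal.ofReal (f i ω ^ p) ∂P := by
  have hg : Measurable fun x : ℝ => ENNReal.ofReal (x ^ p) :=
    ENNReal.measurable_ofReal.comp (measurable_id.pow_const p)
  refine (lintegral_congr_ae ?_).trans (lintegral_prod_eq_prod_lintegral_of_indepFun s _
    (hf.comp _ fun _ => hg) fun i => hg.comp (hfm i))
  filter_upwards [(Filter.eventually_all_finset s).2 hs] with ω hω
  rw [← Real.finsetProd_rpow s _ hω, ENNReal.ofReal_prod_of_nonneg fun i hi =>
    Real.rpow_nonneg (hω i hi) p]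

lemma eq_pow_mul_mul_prod_range {M : Type*} [CommMonoid M] {x w : ℕ → M} {b : M}
    (h : ∀ n, x (n + 1) = b * x n * w n) (n : ℕ) :
    x n = b ^ n * (x 0 * ∏ k ∈ Finset.range n, w k) := by
  induction n with
  | zero => simp
  | succ n ih => rw [h, ih, Finset.prod_range_succ, pow_succ]; ac_rfl

lemma rpow_mul_lt_one_of_lt_rpow_neg_inv {δ m β : ℝ} (hδ : 0 ≤ δ) (hm : 0 ≤ m) (hβ : 0 < β)
    (h : δ < m ^ (-β⁻¹)) : δ ^ β * m < 1 := by
  rcases hm.eq_or_lt with rfl | hm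
  · simp
  have hδβ : δ ^ β < m⁻¹ := by
    calc δ ^ β < (m ^ (-β⁻¹)) ^ β := Real.rpow_lt_rpow hδ h hβ
      _ = m⁻¹ := by rw [← Real.rpow_mul hm.le, neg_mul, inv_mul_cancel₀ hβ.ne', Real.rpow_neg_one]
  simpa [hm.ne'] using mul_lt_mul_of_pos_right hδβ hm

lemma tsum_ofReal_rpow_pow_mul_mul_pow_ne_top {δ β : ℝ} (hδ : 0 ≤ δ) {A M : ENNReal}
    (hA : A ≠ ⊤) (hq : ENNReal.ofReal (δ ^ β) * M < 1) :
    ∑' n, ENNReal.ofReal ((δ ^ (n + 1)) ^ β) * (A * M ^ (n + 1)) ≠ ⊤ := by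
  simp_rw [← Real.rpow_pow_comm hδ, ENNReal.ofReal_pow (Real.rpow_nonneg hδ β),
    mul_left_comm _ A, ← mul_pow, ENNReal.tsum_mul_left, ENNReal.tsum_geometric_add_one]
  exact ENNReal.mul_ne_top hA (ENNReal.mul_ne_top (hq.trans ENNReal.one_lt_top).ne
    (ENNReal.inv_ne_top.2 (tsub_pos_of_lt hq).ne'))

lemma ofReal_rpow_mul_lintegral_rpow_lt_one {Ω : Type*} [MeasurableSpace Ω] {P : Measure Ω}
    [IsFiniteMeasure P] {V : Ω → ℝ} (hV : Measurable V) (hV01 : ∀ᵐ ω ∂P, V ω ∈ Ioo 0 1)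
    {β δ : ℝ} (hβ : 0 < β) (hδ0 : 0 ≤ δ) (hδ : δ < (∫ ω, V ω ^ β ∂P) ^ (-β⁻¹)) :
    ENNReal.ofReal (δ ^ β) * ∫⁻ ω, ENNReal.ofReal (V ω ^ β) ∂P < 1 := by
  have hVβ_nonneg : 0 ≤ᵐ[P] fun ω => V ω ^ β := hV01.mono fun ω hω => Real.rpow_nonneg hω.1.le β
  have hVβ_int : Integrable (fun ω => V ω ^ β) P :=
    Integrable.of_mem_Icc 0 1 (hV.pow_const β).aemeasurable <| hV01.mono fun ω hω =>
      ⟨Real.rpow_nonneg hω.1.le β, Real.rpow_le_one hω.1.le hω.2.le hβ.le⟩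
  rw [← ofReal_integral_eq_lintegral_ofReal hVβ_int hVβ_nonneg,
    ← ENNReal.ofReal_mul (Real.rpow_nonneg hδ0 β)]
  exact ENNReal.ofReal_lt_one.2 (rpow_mul_lt_one_of_lt_rpow_neg_inv hδ0
    (integral_nonneg_of_ae hVβ_nonneg) hβ hδ)

section HiddenMarkovModel

variable {Ω : Type*} {W G : ℕ → Ω → ℝ} {X0 : Ω → ℝ}

def stateIndices (n : ℕ) : Finset (ℕ ⊕ (ℕ ⊕ Unit)) :=
  insert (.inr (.inr ())) ((Finset.range n).map .inl)

lemma prod_stateIndices (n : ℕ) (ω : Ω) :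
    ∏ i ∈ stateIndices n, Sum.elim W (Sum.elim G fun _ : Unit => X0) i ω =
      X0 ω * ∏ k ∈ Finset.range n, W k ω := by
  rw [stateIndices, Finset.prod_insert (by simp), Finset.prod_map]
  rfl

variable [MeasurableSpace Ω] {P : Measure Ω}
  (hWm : ∀ n, Measurable (W n)) (hGm : ∀ n, Measurable (G n)) (hX0m : Measurable X0)
include hWm hGm hX0m

lemma measurable_sumElim : ∀ i, Measurable (Sum.elim W (Sum.elim G fun _ : Unit => X0) i)
  | .inl n => hWm n
  | .inr (.inl n) => hGm n
  | .inr (.inr _) => hX0m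

variable (hindep : iIndepFun (Sum.elim W (Sum.elim G fun _ : Unit => X0)) P)
include hindep

lemma indepFun_prod_range_succ (n : ℕ) :
    IndepFun (fun ω => X0 ω * ∏ k ∈ Finset.range (n + 1), W k ω) (G n) P := by
  have := hindep.indepFun_finsetProd_of_notMem (measurable_sumElim hWm hGm hX0m)
    (i := .inr (.inl n)) (s := stateIndices (n + 1)) (by simp [stateIndices])
  simpa only [Finset.prod_fn, prod_stateIndices, Sum.elim_inr, Sum.elim_inl] using this

lemma lintegral_rpow_prod_range (hWlaw : ∀ n, P.map (W n) = P.map (W 0))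
    (hW0 : ∀ n, 0 ≤ᵐ[P] W n) (hX00 : 0 ≤ᵐ[P] X0) (p : ℝ) (n : ℕ) :
    ∫⁻ ω, ENNReal.ofReal ((X0 ω * ∏ k ∈ Finset.range n, W k ω) ^ p) ∂P =
      (∫⁻ ω, ENNReal.ofReal (X0 ω ^ p) ∂P) * (∫⁻ ω, ENNReal.ofReal (W 0 ω ^ p) ∂P) ^ n := by
  have hg : Measurable fun x : ℝ => ENNReal.ofReal (x ^ p) :=
    ENNReal.measurable_ofReal.comp (measurable_id.pow_const p)
  have hW_moment (k : ℕ) :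
      ∫⁻ ω, ENNReal.ofReal (W k ω ^ p) ∂P = ∫⁻ ω, ENNReal.ofReal (W 0 ω ^ p) ∂P := by
    rw [← lintegral_map hg (hWm k), hWlaw k, lintegral_map hg (hWm 0)]
  have hnonneg : ∀ i ∈ stateIndices n, 0 ≤ᵐ[P] Sum.elim W (Sum.elim G fun _ : Unit => X0) i := by
    simp only [stateIndices, Finset.mem_insert, Finset.mem_map]
    rintro i (rfl | ⟨k, -, rfl⟩)
    exacts [hX00, hW0 k]
  calc _ = ∫⁻ ω, ENNReal.ofReal ((∏ i ∈ stateIndices n,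
          Sum.elim W (Sum.elim G fun _ : Unit => X0) i ω) ^ p) ∂P := by
        simp only [prod_stateIndices]
    _ = _ := lintegral_ofReal_prod_rpow_of_iIndepFun hindep
          (measurable_sumElim hWm hGm hX0m) _ hnonneg p
    _ = _ := by simp [stateIndices, hW_moment]

end HiddenMarkovModel

theorem eventually_obs_large_general
    {Ω : Type*} [MeasurableSpace Ω] (P : Measure Ω) [IsProbabilityMeasure P]
    (α β b : ℝ) (hβ : 0 < β) (hb : 0 < b)
    (W G : ℕ → Ω → ℝ) (X0 : Ω → ℝ) (X Y : ℕ → Ω → ℝ)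
    (hWm : ∀ n, Measurable (W n)) (hGm : ∀ n, Measurable (G n)) (hX0m : Measurable X0)
    (hW : ∀ n, Measure.map (W n) P = betaMeas α β)
    (hG : ∀ n, Measure.map (G n) P = gammaMeas 1 β)
    (hindep : ProbabilityTheory.iIndepFun
      (Sum.elim W (Sum.elim G fun _ : Unit => X0)) P)
    (hX0pos : ∀ ω, 0 < X0 ω)
    (hX0 : X 0 = X0) (hXrec : ∀ n ω, X (n + 1) ω = b * X n ω * W n ω)
    (hY : ∀ n ω, Y (n + 1) ω = G n ω / X (n + 1) ω)
    (hX0int : Integrable (fun ω => X0 ω ^ β) P)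
    (δ : ℝ) (hδ0 : 0 ≤ δ) (hδ : δ < (∫ ω, W 0 ω ^ β ∂P) ^ (-β⁻¹)) :
    ∀ᵐ ω ∂P, ∃ N : ℕ, ∀ j, N ≤ j → δ ^ j < b ^ j * Y j ω := by
  set Z : ℕ → Ω → ℝ := fun n ω => X0 ω * ∏ k ∈ Finset.range n, W k ω
  have hWae : ∀ᵐ ω ∂P, ∀ n, W n ω ∈ Ioo 0 1 := ae_all_iff.2 fun n =>
    ae_of_ae_map (hWm n).aemeasurable (hW n ▸ ae_betaMeas_mem_Ioo α β)
  have hZpos : ∀ᵐ ω ∂P, ∀ n, 0 < Z n ω := hWae.mono fun ω hω n =>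
    mul_pos (hX0pos ω) (Finset.prod_pos fun k _ => (hω k).1)
  have hratio := ofReal_rpow_mul_lintegral_rpow_lt_one (hWm 0)
    (hWae.mono fun ω hω => hω 0) hβ hδ0 hδ
  have hmoment (n : ℕ) : ∫⁻ ω, ENNReal.ofReal (Z n ω ^ β) ∂P =
      (∫⁻ ω, ENNReal.ofReal (X0 ω ^ β) ∂P) * (∫⁻ ω, ENNReal.ofReal (W 0 ω ^ β) ∂P) ^ n :=
    lintegral_rpow_prod_range hWm hGm hX0m hindep (fun n => (hW n).trans (hW 0).symm)
      (fun n => hWae.mono fun ω hω => (hω n).1.le) (ae_of_all _ fun ω => (hX0pos ω).le) β n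
  have hsum : ∑' n, ENNReal.ofReal ((δ ^ (n + 1)) ^ β) *
      ∫⁻ ω, ENNReal.ofReal (Z (n + 1) ω ^ β) ∂P ≠ ⊤ := by
    simp_rw [hmoment]
    exact tsum_ofReal_rpow_pow_mul_mul_pow_ne_top hδ0 hX0int.lintegral_lt_top.ne hratio
  have hkey := ae_eventually_mul_lt_of_indepFun_gammaMeas (Z := fun n => Z (n + 1))
    zero_le_one hβ (fun n => pow_nonneg hδ0 (n + 1))
    (fun n => hX0m.mul (Finset.measurable_prod _ fun k _ => hWm k)) hGm
    (fun n => hZpos.mono fun ω hω => (hω (n + 1)).le)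
    (indepFun_prod_range_succ hWm hGm hX0m hindep) hG hsum
  filter_upwards [hkey, hZpos] with ω hω hZω
  obtain ⟨N, hN⟩ := eventually_atTop.1 hω
  refine ⟨N + 1, fun j hj => ?_⟩
  obtain ⟨n, rfl⟩ : ∃ n, j = n + 1 := ⟨j - 1, by omega⟩
  have hX : X (n + 1) ω = b ^ (n + 1) * Z (n + 1) ω := by
    rw [eq_pow_mul_mul_prod_range (x := fun n => X n ω) (fun n => hXrec n ω), hX0]
  rw [hY, hX, ← mul_div_assoc, mul_div_mul_left _ _ (pow_pos hb _).ne', lt_div_iff₀ (hZω _)]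
  exact hN n (by omega)

/-- Lemma 2: if `E(X₀^β) < ∞` and `0 ≤ δ < E(W₁^β)^{-1/β}` then almost surely
`b^j Y_j > δ^j` for all sufficiently large `j`. -/
theorem eventually_obs_large
    {Ω : Type*} [MeasurableSpace Ω] (P : Measure Ω) [IsProbabilityMeasure P]
    (α β b : ℝ) (hα : 0 < α) (hβ : 0 < β) (hb : 0 < b)
    (W G : ℕ → Ω → ℝ) (X0 : Ω → ℝ) (X Y : ℕ → Ω → ℝ)
    (hWm : ∀ n, Measurable (W n)) (hGm : ∀ n, Measurable (G n)) (hX0m : Measurable X0)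
    (hW : ∀ n, Measure.map (W n) P = betaMeas α β)
    (hG : ∀ n, Measure.map (G n) P = gammaMeas 1 β)
    (hindep : ProbabilityTheory.iIndepFun
      (Sum.elim W (Sum.elim G fun _ : Unit => X0)) P)
    (hX0pos : ∀ ω, 0 < X0 ω)
    (hX0 : X 0 = X0) (hXrec : ∀ n ω, X (n + 1) ω = b * X n ω * W n ω)
    (hY : ∀ n ω, Y (n + 1) ω = G n ω / X (n + 1) ω)
    (hX0int : Integrable (fun ω => X0 ω ^ β) P)
    (δ : ℝ) (hδ0 : 0 ≤ δ) (hδ : δ < (∫ ω, W 0 ω ^ β ∂P) ^ (-β⁻¹)) :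
    ∀ᵐ ω ∂P, ∃ N : ℕ, ∀ j, N ≤ j → δ ^ j < b ^ j * Y j ω :=
  eventually_obs_large_general P α β b hβ hb W G X0 X Y hWm hGm hX0m hW hG hindep hX0pos hX0 hXrec
    hY hX0int δ hδ0 hδ
end
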